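/- Let 𝒪 be an infinite order ideal in P = K[x_0,…,x_n] and let G be a homogeneous ∂𝒪-prebasis. Then G is a homogeneous ∂𝒪-basis if and only if for every d ≥ 0 and all r, s ∈ {0,…,n}, the graded formal multiplication matrices of G satisfy Χ_r^{(d+1)}·Χ_s^{(d)} = Χ_s^{(d+1)}·Χ_r^{(d)}. -/

import Mathlib

open MvPolynomial

namespace Border

/-- A term of `K[x_0, …, x_n]`, identified with its exponent vector. -/
abbrev Term (n : ℕ) := Fin (n + 1) →₀ ℕ

variable {n : ℕ}

/-- The (standard) degree of a term. -/
def tdeg (m : Term n) : ℕ := ∑ i, m i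

/-- An order ideal: a nonempty set of terms closed under divisors. -/
def IsOrderIdeal (O : Set (Term n)) : Prop :=
  O.Nonempty ∧ ∀ τ ∈ O, ∀ τ' : Term n, τ' ≤ τ → τ' ∈ O

/-- The border `∂𝒪 = (x_0·𝒪 ∪ ⋯ ∪ x_n·𝒪) ∖ 𝒪`. -/
def border (O : Set (Term n)) : Set (Term n) :=
  {σ | σ ∉ O ∧ ∃ r : Fin (n + 1), ∃ τ ∈ O, σ = τ + Finsupp.single r 1}

/-- Multiplicative set of a border term `σ`, with respect to a labeling `lab` of the border:
`𝒯_σ = {η : σ' ∤ η·σ for every border term σ' with a larger label}`. -/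
def mulSet (O : Set (Term n)) (lab : Term n → ℕ) (σ : Term n) : Set (Term n) :=
  {η | ∀ σ' ∈ border O, lab σ < lab σ' → ¬ σ' ≤ η + σ}

/-- The cone `C(σ) = {η·σ : η ∈ 𝒯_σ}`. -/
def cone (O : Set (Term n)) (lab : Term n → ℕ) (σ : Term n) : Set (Term n) :=
  (fun η => η + σ) '' mulSet O lab σ

/-- A labeling of the border which is injective and ordered increasingly by degree. -/
def DegOrderedLabeling (O : Set (Term n)) (lab : Term n → ℕ) : Prop :=
  Set.InjOn lab (border O) ∧
    ∀ σ ∈ border O, ∀ σ' ∈ border O, lab σ < lab σ' → tdeg σ ≤ tdeg σ'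

/-- Iterated border closures: `∂⁰𝒪 := 𝒪`, and the `(k+1)`-st closure adds the border. -/
def borderClosure (O : Set (Term n)) : ℕ → Set (Term n)
  | 0 => O
  | k + 1 => borderClosure O k ∪ border (borderClosure O k)

/-- The index `ind_𝒪(τ)`: the least `k` with `τ ∈ ∂^k𝒪`. -/
noncomputable def ind (O : Set (Term n)) (τ : Term n) : ℕ :=
  sInf {k | τ ∈ borderClosure O k}

/-- Degree-`d` part of a set of terms. -/
def Od (O : Set (Term n)) (d : ℕ) : Set (Term n) := {τ | τ ∈ O ∧ tdeg τ = d}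

variable {K : Type*} [Field K]

/-- The index of a nonzero polynomial: the maximal index of a term of its support. -/
noncomputable def indP (O : Set (Term n)) (f : MvPolynomial (Fin (n + 1)) K) : ℕ :=
  f.support.sup (ind O)

/-- A homogeneous `∂𝒪`-prebasis: a family `g σ = σ - Σ_{τ ∈ 𝒪_{deg σ}} c_{στ} τ`. -/
def IsPrebasis (O : Set (Term n)) (g : Term n → MvPolynomial (Fin (n + 1)) K) : Prop :=
  ∀ σ ∈ border O, ∀ τ ∈ (monomial σ (1 : K) - g σ).support, τ ∈ O ∧ tdeg τ = tdeg σ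

/-- The set of border reductors `𝒯G = {η·g_σ : σ ∈ ∂𝒪, η ∈ 𝒯_σ}`. -/
def reductors (O : Set (Term n)) (lab : Term n → ℕ)
    (g : Term n → MvPolynomial (Fin (n + 1)) K) : Set (MvPolynomial (Fin (n + 1)) K) :=
  {p | ∃ σ ∈ border O, ∃ η ∈ mulSet O lab σ, p = monomial η (1 : K) * g σ}

/-- The degree-`d` border reductors `𝒯G_d = 𝒯G ∩ P_d`. -/
def reductorsDeg (O : Set (Term n)) (lab : Term n → ℕ)
    (g : Term n → MvPolynomial (Fin (n + 1)) K) (d : ℕ) :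
    Set (MvPolynomial (Fin (n + 1)) K) :=
  reductors O lab g ∩ {p | p.IsHomogeneous d}

/-- One step of the border reduction relation `→_G`. -/
def Step (O : Set (Term n)) (lab : Term n → ℕ)
    (g : Term n → MvPolynomial (Fin (n + 1)) K)
    (f h : MvPolynomial (Fin (n + 1)) K) : Prop :=
  ∃ σ ∈ border O, ∃ η ∈ mulSet O lab σ, η + σ ∈ f.support ∧
    h = f - f.coeff (η + σ) • (monomial η (1 : K) * g σ)

/-- The border reduction relation `→⁺_G` (finitely many, possibly zero, steps). -/
def Reduces (O : Set (Term n)) (lab : Term n → ℕ)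
    (g : Term n → MvPolynomial (Fin (n + 1)) K) :
    MvPolynomial (Fin (n + 1)) K → MvPolynomial (Fin (n + 1)) K → Prop :=
  Relation.ReflTransGen (Step O lab g)

/-- The `K`-vector space spanned by a set of terms. -/
noncomputable def spanTerms (K : Type*) [Field K] (S : Set (Term n)) :
    Submodule K (MvPolynomial (Fin (n + 1)) K) :=
  Submodule.span K ((fun τ => monomial τ (1 : K)) '' S)

/-- The ideal `(G)` generated by a `∂𝒪`-prebasis. -/
noncomputable def idealG (O : Set (Term n)) (g : Term n → MvPolynomial (Fin (n + 1)) K) :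
    Ideal (MvPolynomial (Fin (n + 1)) K) :=
  Ideal.span (g '' border O)

/-- The degree-`d` part `I_d` of an ideal, as a `K`-vector subspace. -/
noncomputable def degPart (I : Ideal (MvPolynomial (Fin (n + 1)) K)) (d : ℕ) :
    Submodule K (MvPolynomial (Fin (n + 1)) K) :=
  Submodule.restrictScalars K I ⊓ homogeneousSubmodule (Fin (n + 1)) K d

/-- Homogeneous ideal. -/
def IsHomogeneousIdeal (I : Ideal (MvPolynomial (Fin (n + 1)) K)) : Prop :=
  ∀ f ∈ I, ∀ d : ℕ, homogeneousComponent d f ∈ I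

/-- `G` is a homogeneous `∂𝒪`-basis of `J`: it is a prebasis contained in `J` and for every
`d` one has `P_d = J_d ⊕ ⟨𝒪_d⟩`, i.e. the residue classes of `𝒪_d` are a basis of `P_d/J_d`. -/
def IsBorderBasisOf (O : Set (Term n)) (g : Term n → MvPolynomial (Fin (n + 1)) K)
    (J : Ideal (MvPolynomial (Fin (n + 1)) K)) : Prop :=
  IsPrebasis O g ∧ (∀ σ ∈ border O, g σ ∈ J) ∧
    ∀ d : ℕ, degPart J d ⊔ spanTerms K (Od O d) = homogeneousSubmodule (Fin (n + 1)) K d ∧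
      Disjoint (degPart J d) (spanTerms K (Od O d))

/-- An `m`-lower representation of `f` by `𝒯G`: `f = Σ c_j • η_j·g_{σ_j}` with distinct
pairs `(η_j, σ_j)`, `η_j ∈ 𝒯_{σ_j}` and `ind(η_j σ_j) ≤ m`. -/
def HasLRep (O : Set (Term n)) (lab : Term n → ℕ)
    (g : Term n → MvPolynomial (Fin (n + 1)) K)
    (f : MvPolynomial (Fin (n + 1)) K) (m : ℕ) : Prop :=
  ∃ (s : Finset (Term n × Term n)) (c : Term n × Term n → K),
    (∀ p ∈ s, p.2 ∈ border O ∧ p.1 ∈ mulSet O lab p.2 ∧ ind O (p.1 + p.2) ≤ m) ∧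
    f = ∑ p ∈ s, c p • (monomial p.1 (1 : K) * g p.2)

/-- An `m`-lower representation of `f` by `𝒯G_d`. -/
def HasLRepDeg (O : Set (Term n)) (lab : Term n → ℕ)
    (g : Term n → MvPolynomial (Fin (n + 1)) K)
    (f : MvPolynomial (Fin (n + 1)) K) (m d : ℕ) : Prop :=
  ∃ (s : Finset (Term n × Term n)) (c : Term n × Term n → K),
    (∀ p ∈ s, p.2 ∈ border O ∧ p.1 ∈ mulSet O lab p.2 ∧ ind O (p.1 + p.2) ≤ m ∧
      (monomial p.1 (1 : K) * g p.2).IsHomogeneous d) ∧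
    f = ∑ p ∈ s, c p • (monomial p.1 (1 : K) * g p.2)

/-- The subtype of terms of `𝒪` of degree `d`. -/
abbrev OdSub (O : Set (Term n)) (d : ℕ) : Type _ := {τ : Term n // τ ∈ Od O d}

lemma tdeg_component_lt {d : ℕ} (m : Term n) (h : tdeg m = d) (i : Fin (n + 1)) :
    m i < d + 1 := by
  have : m i ≤ tdeg m :=
    Finset.single_le_sum (f := fun j => m j) (fun j _ => Nat.zero_le _) (Finset.mem_univ i)
  omega

instance (O : Set (Term n)) (d : ℕ) : Finite (OdSub O d) := by
  have hinj : Function.Injective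
      (fun τ : OdSub O d => fun i : Fin (n + 1) =>
        (⟨τ.1 i, tdeg_component_lt τ.1 τ.2.2 i⟩ : Fin (d + 1))) := by
    intro a b hab
    apply Subtype.ext
    apply Finsupp.ext
    intro i
    simpa using congrArg Fin.val (congrFun hab i)
  exact Finite.of_injective _ hinj

noncomputable instance (O : Set (Term n)) (d : ℕ) : Fintype (OdSub O d) :=
  Fintype.ofFinite _

open scoped Classical in
/-- The `r`-th `d`-graded formal multiplication matrix of a prebasis `G`,
with rows indexed by `𝒪_{d+1}` and columns by `𝒪_d`. -/
noncomputable def multMatrix (O : Set (Term n))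
    (g : Term n → MvPolynomial (Fin (n + 1)) K) (r : Fin (n + 1)) (d : ℕ) :
    Matrix (OdSub O (d + 1)) (OdSub O d) K :=
  Matrix.of fun τ' τ =>
    if τ.1 + Finsupp.single r 1 ∈ O then
      (if τ.1 + Finsupp.single r 1 = τ'.1 then 1 else 0)
    else (monomial (τ.1 + Finsupp.single r 1) (1 : K)
            - g (τ.1 + Finsupp.single r 1)).coeff τ'.1

/-- The minimum degree of a border term. -/
noncomputable def minDegBorder (O : Set (Term n)) : ℕ := sInf (tdeg '' border O)

/-- The `d`-th Macaulay transformation `a^{⟨d⟩}`, computed greedily. -/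
noncomputable def macaulay : ℕ → ℕ → ℕ
  | 0, _ => 0
  | d + 1, a =>
    if a = 0 then 0
    else
      Nat.choose (sSup {k | Nat.choose k (d + 1) ≤ a} + 1) (d + 2) +
        macaulay d (a - Nat.choose (sSup {k | Nat.choose k (d + 1) ≤ a}) (d + 1))

/-- An ideal is generated in degrees `≤ m` if it is generated by its homogeneous
elements of degree `≤ m`. -/
def GeneratedInDegLE (I : Ideal (MvPolynomial (Fin (n + 1)) K)) (m : ℕ) : Prop :=
  I = Ideal.span {f | f ∈ I ∧ ∃ d ≤ m, f.IsHomogeneous d}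

/-!
Modulo `(G)`, the matrix `Χ_r^{(d)}` represents multiplication by `x_r` from `⟨𝒪_d⟩` to
`⟨𝒪_{d+1}⟩`: `x_r · Σ v_τ τ ≡ Σ (Χ_r^{(d)} v)_τ' τ'`. If `G` is a basis, applying this twice to
`x_r x_s = x_s x_r` and using `(G)_{d+2} ∩ ⟨𝒪_{d+2}⟩ = 0` gives the commutation relations.
Conversely, commuting matrices assign to every term `x^α` of degree `d` a coordinate vector
`Χ_{r_1}^{(d-1)} ⋯ Χ_{r_d}^{(0)} e_1` independent of the factorization of `x^α` into variables.
The induced linear map `P_d → K^{𝒪_d}` is the identity on `⟨𝒪_d⟩` and kills every `η · g_σ`,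
hence `(G)_d`, while each term minus the polynomial with its coordinates lies in `(G)`; this is
exactly `P_d = (G)_d ⊕ ⟨𝒪_d⟩`.
-/

open scoped Matrix

lemma tdeg_eq_degree (m : Term n) : tdeg m = m.degree := (Finsupp.degree_eq_sum m).symm

lemma tdeg_add (a b : Term n) : tdeg (a + b) = tdeg a + tdeg b := by
  simp only [tdeg_eq_degree, map_add]

lemma tdeg_single_one (r : Fin (n + 1)) : tdeg (Finsupp.single r 1 : Term n) = 1 := by
  rw [tdeg_eq_degree, Finsupp.degree_single]

lemma tdeg_eq_zero {m : Term n} : tdeg m = 0 ↔ m = 0 := by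
  rw [tdeg_eq_degree, Finsupp.degree_eq_zero_iff]

lemma tdeg_add_single_one (m : Term n) (r : Fin (n + 1)) :
    tdeg (m + Finsupp.single r 1) = tdeg m + 1 := by
  rw [tdeg_add, tdeg_single_one]

lemma exists_eq_add_single_one {m : Term n} (hm : m ≠ 0) :
    ∃ (m' : Term n) (r : Fin (n + 1)), m = m' + Finsupp.single r 1 := by
  obtain ⟨r, hr⟩ := Finsupp.support_nonempty_iff.mpr hm
  refine ⟨m - Finsupp.single r 1, r, (tsub_add_cancel_of_le ?_).symm⟩
  rw [Finsupp.single_le_iff]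
  exact Nat.one_le_iff_ne_zero.mpr (Finsupp.mem_support_iff.mp hr)

lemma isHomogeneous_monomial_of_tdeg {m : Term n} {d : ℕ} (c : K) (hm : tdeg m = d) :
    (monomial m c).IsHomogeneous d :=
  isHomogeneous_monomial c (by rw [← tdeg_eq_degree, hm])

lemma X_mul_monomial_eq (r : Fin (n + 1)) (m : Term n) (c : K) :
    X r * monomial m c = monomial (m + Finsupp.single r 1) c := by
  rw [monomial_add_single, pow_one, mul_comm]

lemma IsOrderIdeal.zero_mem {O : Set (Term n)} (hO : IsOrderIdeal O) : (0 : Term n) ∈ O := by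
  obtain ⟨τ, hτ⟩ := hO.1
  exact hO.2 τ hτ 0 zero_le

section Coordinates

variable (O : Set (Term n)) (d : ℕ)

noncomputable def ofCoords : (OdSub O d → K) →ₗ[K] MvPolynomial (Fin (n + 1)) K :=
  Fintype.linearCombination K fun τ => monomial τ.1 1

variable {O d}

lemma ofCoords_single (τ : OdSub O d) : ofCoords O d (Pi.single τ 1) = monomial τ.1 (1 : K) := by
  classical
  rw [ofCoords, Fintype.linearCombination_apply_single, one_smul]

lemma coeff_ofCoords (v : OdSub O d → K) (τ : OdSub O d) :
    (ofCoords O d v).coeff τ.1 = v τ := by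
  rw [ofCoords, Fintype.linearCombination_apply, coeff_sum]
  simp only [coeff_smul, coeff_monomial, smul_eq_mul, mul_ite, mul_one, mul_zero,
    Subtype.val_inj, Finset.sum_ite_eq', Finset.mem_univ, if_true]

lemma ofCoords_injective : Function.Injective (ofCoords O d (K := K)) := fun v w h =>
  funext fun τ => by rw [← coeff_ofCoords v, ← coeff_ofCoords w, h]

lemma ofCoords_coeff {p : MvPolynomial (Fin (n + 1)) K} (hp : ∀ m ∈ p.support, m ∈ Od O d) :
    ofCoords O d (fun τ => p.coeff τ.1) = p := by
  ext m
  by_cases hm : m ∈ Od O d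
  · exact coeff_ofCoords _ ⟨m, hm⟩
  · rw [notMem_support_iff.mp fun h => hm (hp m h), ofCoords, Fintype.linearCombination_apply,
      coeff_sum]
    refine Finset.sum_eq_zero fun τ _ => ?_
    rw [coeff_smul, coeff_monomial, if_neg fun h : τ.1 = m => hm (h ▸ τ.2), smul_zero]

lemma ofCoords_mem_spanTerms (v : OdSub O d → K) : ofCoords O d v ∈ spanTerms K (Od O d) :=
  Submodule.sum_mem _ fun τ _ =>
    Submodule.smul_mem _ _ (Submodule.subset_span ⟨τ.1, τ.2, rfl⟩)

lemma ofCoords_mem_homogeneousSubmodule (v : OdSub O d → K) :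
    ofCoords O d v ∈ homogeneousSubmodule (Fin (n + 1)) K d :=
  Submodule.sum_mem _ fun τ _ => Submodule.smul_mem _ _ <|
    (mem_homogeneousSubmodule _ _).mpr (isHomogeneous_monomial_of_tdeg 1 τ.2.2)

lemma spanTerms_le_range_ofCoords :
    spanTerms K (Od O d) ≤ LinearMap.range (ofCoords O d (K := K)) := by
  rw [spanTerms, Submodule.span_le]
  rintro _ ⟨τ, hτ, rfl⟩
  exact ⟨Pi.single ⟨τ, hτ⟩ 1, ofCoords_single _⟩

lemma spanTerms_le_homogeneousSubmodule :
    spanTerms K (Od O d) ≤ homogeneousSubmodule (Fin (n + 1)) K d := by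
  rw [spanTerms, Submodule.span_le]
  rintro _ ⟨τ, hτ, rfl⟩
  exact (mem_homogeneousSubmodule _ _).mpr (isHomogeneous_monomial_of_tdeg 1 hτ.2)

end Coordinates

section MultMatrix

variable {O : Set (Term n)} {g : Term n → MvPolynomial (Fin (n + 1)) K} {d : ℕ}

lemma multMatrix_mulVec_single_of_mem {r : Fin (n + 1)} (τ : OdSub O d)
    (h : τ.1 + Finsupp.single r 1 ∈ O) :
    multMatrix O g r d *ᵥ Pi.single τ 1 =
      Pi.single ⟨τ.1 + Finsupp.single r 1, h, by rw [tdeg_add_single_one, τ.2.2]⟩ 1 := by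
  classical
  funext τ'
  simp only [Matrix.mulVec_single_one, Matrix.col_apply, multMatrix, Matrix.of_apply, if_pos h,
    Pi.single_apply, Subtype.ext_iff, eq_comm]

lemma ofCoords_multMatrix_mulVec_single_of_notMem (hg : IsPrebasis O g) {r : Fin (n + 1)}
    (τ : OdSub O d) (h : τ.1 + Finsupp.single r 1 ∉ O) :
    ofCoords O (d + 1) (multMatrix O g r d *ᵥ Pi.single τ 1) =
      monomial (τ.1 + Finsupp.single r 1) 1 - g (τ.1 + Finsupp.single r 1) := by
  classical
  have hσ : τ.1 + Finsupp.single r 1 ∈ border O := ⟨h, r, τ.1, τ.2.1, rfl⟩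
  refine (congrArg _ ?_).trans (ofCoords_coeff fun m hm => ⟨(hg _ hσ m hm).1, ?_⟩)
  · funext τ'
    simp only [Matrix.mulVec_single_one, Matrix.col_apply, multMatrix, Matrix.of_apply, if_neg h]
  · rw [(hg _ hσ m hm).2, tdeg_add_single_one, τ.2.2]

lemma X_mul_ofCoords_sub_mem_idealG (hg : IsPrebasis O g) (r : Fin (n + 1))
    (v : OdSub O d → K) :
    X r * ofCoords O d v - ofCoords O (d + 1) (multMatrix O g r d *ᵥ v) ∈ idealG O g := by
  classical
  rw [pi_eq_sum_univ' v]
  simp only [map_sum, map_smul, Matrix.mulVec_sum, Matrix.mulVec_smul, Finset.mul_sum,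
    mul_smul_comm, ← Finset.sum_sub_distrib, ← smul_sub]
  refine Ideal.sum_mem _ fun τ _ => Submodule.smul_of_tower_mem _ _ ?_
  rw [ofCoords_single, X_mul_monomial_eq]
  by_cases h : τ.1 + Finsupp.single r 1 ∈ O
  · rw [multMatrix_mulVec_single_of_mem τ h, ofCoords_single, sub_self]
    exact Ideal.zero_mem _
  · rw [ofCoords_multMatrix_mulVec_single_of_notMem hg τ h, sub_sub_cancel]
    exact Ideal.subset_span ⟨_, ⟨h, r, τ.1, τ.2.1, rfl⟩, rfl⟩

lemma X_mul_X_mul_ofCoords_sub_mem_idealG (hg : IsPrebasis O g) (r s : Fin (n + 1))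
    (v : OdSub O d → K) :
    X s * (X r * ofCoords O d v)
      - ofCoords O (d + 2) (multMatrix O g s (d + 1) *ᵥ (multMatrix O g r d *ᵥ v))
      ∈ idealG O g := by
  have h := Ideal.add_mem _ (Ideal.mul_mem_left _ (X s) (X_mul_ofCoords_sub_mem_idealG hg r v))
    (X_mul_ofCoords_sub_mem_idealG hg s (multMatrix O g r d *ᵥ v))
  convert h using 1
  ring

theorem multMatrix_comm_of_disjoint (hg : IsPrebasis O g)
    (hdisj : Disjoint (degPart (idealG O g) (d + 2)) (spanTerms K (Od O (d + 2))))
    (r s : Fin (n + 1)) :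
    multMatrix O g r (d + 1) * multMatrix O g s d =
      multMatrix O g s (d + 1) * multMatrix O g r d := by
  refine Matrix.ext_iff_mulVec.mpr fun v => ofCoords_injective (sub_eq_zero.mp ?_)
  rw [← Matrix.mulVec_mulVec, ← Matrix.mulVec_mulVec, ← map_sub]
  refine Submodule.disjoint_def.mp hdisj _
    ⟨(?_ : _ ∈ idealG O g), ofCoords_mem_homogeneousSubmodule _⟩ (ofCoords_mem_spanTerms _)
  have h := Ideal.sub_mem _ (X_mul_X_mul_ofCoords_sub_mem_idealG hg r s v)
    (X_mul_X_mul_ofCoords_sub_mem_idealG hg s r v)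
  convert h using 1
  rw [map_sub]
  ring

end MultMatrix

def MultMatricesCommute (O : Set (Term n)) (g : Term n → MvPolynomial (Fin (n + 1)) K) : Prop :=
  ∀ (d : ℕ) (r s : Fin (n + 1)),
    multMatrix O g r (d + 1) * multMatrix O g s d = multMatrix O g s (d + 1) * multMatrix O g r d

noncomputable def someVar (m : Term n) : Fin (n + 1) :=
  Classical.epsilon fun r => m r ≠ 0

lemma someVar_ne_zero {m : Term n} (hm : m ≠ 0) : m (someVar m) ≠ 0 :=
  Classical.epsilon_spec (p := fun r => m r ≠ 0)
    (by simpa [Finsupp.ext_iff] using hm)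

section TermCoords

variable (O : Set (Term n)) (g : Term n → MvPolynomial (Fin (n + 1)) K)

/-- The coordinates `Χ_{r_1}^{(d-1)} ⋯ Χ_{r_d}^{(0)} e_1` that the matrices predict for a term
`m = x_{r_1} ⋯ x_{r_d}`, peeling off one variable at a time; junk `0` if `tdeg m ≠ d`. -/
noncomputable def termCoords : (d : ℕ) → Term n → OdSub O d → K
  | 0, m => fun τ => if m = τ.1 then 1 else 0
  | d + 1, m =>
    if tdeg m = d + 1 then
      multMatrix O g (someVar m) d *ᵥ termCoords d (m - Finsupp.single (someVar m) 1)
    else 0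

noncomputable def coordMap (d : ℕ) : MvPolynomial (Fin (n + 1)) K →ₗ[K] OdSub O d → K :=
  (basisMonomials (Fin (n + 1)) K).constr K (termCoords O g d)

variable {O g}

lemma termCoords_of_tdeg_ne {d : ℕ} {m : Term n} (h : tdeg m ≠ d) : termCoords O g d m = 0 := by
  cases d with
  | zero =>
    funext τ
    exact if_neg fun hm : m = τ.1 => h (hm ▸ τ.2.2)
  | succ d => rw [termCoords, if_neg h]

lemma termCoords_of_mem (hO : IsOrderIdeal O) {d : ℕ} {τ : Term n} (hτ : τ ∈ O)
    (hd : tdeg τ = d) : termCoords O g d τ = Pi.single ⟨τ, hτ, hd⟩ 1 := by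
  classical
  induction d generalizing τ with
  | zero =>
    funext τ'
    simp only [termCoords, Pi.single_apply, Subtype.ext_iff, eq_comm]
  | succ d ih =>
    set r := someVar τ
    have hr : Finsupp.single r 1 ≤ τ := by
      rw [Finsupp.single_le_iff]
      exact Nat.one_le_iff_ne_zero.mpr (someVar_ne_zero (fun h => by simp [h, tdeg] at hd))
    have hτ' : τ - Finsupp.single r 1 ∈ O := hO.2 τ hτ _ tsub_le_self
    have hd' : tdeg (τ - Finsupp.single r 1) = d := by
      have := tdeg_add_single_one (τ - Finsupp.single r 1) r
      rw [tsub_add_cancel_of_le hr] at this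
      omega
    have hmem : (⟨_, hτ', hd'⟩ : OdSub O d).1 + Finsupp.single r 1 ∈ O := by
      rwa [tsub_add_cancel_of_le hr]
    rw [termCoords, if_pos hd, ih hτ' hd', multMatrix_mulVec_single_of_mem _ hmem]
    simp only [tsub_add_cancel_of_le hr]

/-- Commutation of the matrices makes `termCoords` independent of the order in which variables
are peeled off. -/
lemma termCoords_add_single (hcomm : MultMatricesCommute O g) {d : ℕ} {m : Term n}
    (hm : tdeg m = d) (r : Fin (n + 1)) :
    termCoords O g (d + 1) (m + Finsupp.single r 1) =
      multMatrix O g r d *ᵥ termCoords O g d m := by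
  induction d using Nat.strong_induction_on generalizing m r with
  | _ d ih =>
    rw [termCoords, if_pos (by rw [tdeg_add_single_one, hm])]
    have hs := someVar_ne_zero (m := m + Finsupp.single r 1) (by simp)
    generalize someVar (m + Finsupp.single r 1) = s at hs ⊢
    obtain rfl | hsr := eq_or_ne s r
    · rw [add_tsub_cancel_right]
    have hms : Finsupp.single s 1 ≤ m := by
      rw [Finsupp.add_apply, Finsupp.single_eq_of_ne hsr] at hs
      rw [Finsupp.single_le_iff]
      omega
    obtain ⟨m', rfl⟩ : ∃ m', m = m' + Finsupp.single s 1 :=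
      ⟨m - Finsupp.single s 1, (tsub_add_cancel_of_le hms).symm⟩
    obtain ⟨d', rfl⟩ : ∃ d', d = d' + 1 := ⟨tdeg m', by rw [← hm, tdeg_add_single_one]⟩
    have hm' : tdeg m' = d' := by rw [tdeg_add_single_one] at hm; omega
    rw [add_right_comm m' (Finsupp.single s 1), add_tsub_cancel_right, ih d' (by omega) hm' r,
      ih d' (by omega) hm' s, Matrix.mulVec_mulVec, Matrix.mulVec_mulVec, hcomm d' s r]

lemma coordMap_monomial (d : ℕ) (m : Term n) (c : K) :
    coordMap O g d (monomial m c) = c • termCoords O g d m := by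
  have h : monomial m c = c • basisMonomials (Fin (n + 1)) K m := by
    simp only [coe_basisMonomials, smul_monomial, smul_eq_mul, mul_one]
  rw [h, map_smul, coordMap, Module.Basis.constr_basis]

lemma coordMap_ofCoords (hO : IsOrderIdeal O) {d : ℕ} (v : OdSub O d → K) :
    coordMap O g d (ofCoords O d v) = v := by
  classical
  rw [pi_eq_sum_univ' v]
  simp only [map_sum, map_smul, ofCoords_single, coordMap_monomial, one_smul]
  exact Finset.sum_congr rfl fun τ _ => by rw [termCoords_of_mem hO τ.2.1 τ.2.2]

lemma coordMap_ofCoords_of_ne {d e : ℕ} (h : e ≠ d) (v : OdSub O e → K) :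
    coordMap O g d (ofCoords O e v) = 0 := by
  classical
  rw [pi_eq_sum_univ' v]
  simp only [map_sum, map_smul, ofCoords_single, coordMap_monomial, one_smul]
  exact Finset.sum_eq_zero fun τ _ => by rw [termCoords_of_tdeg_ne (τ.2.2.trans_ne h), smul_zero]

lemma coordMap_X_mul (hcomm : MultMatricesCommute O g) (d : ℕ) (r : Fin (n + 1))
    (f : MvPolynomial (Fin (n + 1)) K) :
    coordMap O g (d + 1) (X r * f) = multMatrix O g r d *ᵥ coordMap O g d f := by
  induction f using MvPolynomial.induction_on' with
  | monomial m c =>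
    rw [X_mul_monomial_eq, coordMap_monomial, coordMap_monomial, Matrix.mulVec_smul]
    by_cases hm : tdeg m = d
    · rw [termCoords_add_single hcomm hm]
    · rw [termCoords_of_tdeg_ne hm, termCoords_of_tdeg_ne (by rw [tdeg_add_single_one]; omega),
        Matrix.mulVec_zero]
  | add p q hp hq => rw [mul_add, map_add, map_add, hp, hq, Matrix.mulVec_add]

lemma coordMap_zero_X_mul (r : Fin (n + 1)) (f : MvPolynomial (Fin (n + 1)) K) :
    coordMap O g 0 (X r * f) = 0 := by
  induction f using MvPolynomial.induction_on' with
  | monomial m c =>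
    rw [X_mul_monomial_eq, coordMap_monomial,
      termCoords_of_tdeg_ne (by rw [tdeg_add_single_one]; omega), smul_zero]
  | add p q hp hq => rw [mul_add, map_add, hp, hq, add_zero]

lemma coordMap_mul_eq_zero (hcomm : MultMatricesCommute O g) {f : MvPolynomial (Fin (n + 1)) K}
    (hf : ∀ d, coordMap O g d f = 0) (a : MvPolynomial (Fin (n + 1)) K) (d : ℕ) :
    coordMap O g d (a * f) = 0 := by
  induction a using MvPolynomial.induction_on generalizing d with
  | C c => rw [C_mul', map_smul, hf, smul_zero]
  | add p q hp hq => rw [add_mul, map_add, hp, hq, add_zero]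
  | mul_X p r hp =>
    rw [mul_comm p, mul_assoc]
    cases d with
    | zero => exact coordMap_zero_X_mul r _
    | succ d => rw [coordMap_X_mul hcomm, hp, Matrix.mulVec_zero]

lemma coordMap_g (hO : IsOrderIdeal O) (hg : IsPrebasis O g) (hcomm : MultMatricesCommute O g)
    {σ : Term n} (hσ : σ ∈ border O) (d : ℕ) : coordMap O g d (g σ) = 0 := by
  obtain ⟨hσO, r, τ, hτ, rfl⟩ := hσ
  have hg' : g (τ + Finsupp.single r 1) = monomial (τ + Finsupp.single r 1) 1 -
      ofCoords O (tdeg τ + 1) (multMatrix O g r (tdeg τ) *ᵥ Pi.single ⟨τ, hτ, rfl⟩ 1) := by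
    rw [ofCoords_multMatrix_mulVec_single_of_notMem hg _ hσO, sub_sub_cancel]
  rw [hg', map_sub, coordMap_monomial, one_smul]
  obtain rfl | hd := eq_or_ne d (tdeg τ + 1)
  · rw [coordMap_ofCoords hO, termCoords_add_single hcomm rfl, termCoords_of_mem hO hτ rfl,
      sub_self]
  · rw [coordMap_ofCoords_of_ne hd.symm,
      termCoords_of_tdeg_ne (by rw [tdeg_add_single_one]; exact hd.symm),
      sub_self]

lemma coordMap_eq_zero_of_mem_idealG (hO : IsOrderIdeal O) (hg : IsPrebasis O g)
    (hcomm : MultMatricesCommute O g) {f : MvPolynomial (Fin (n + 1)) K} (hf : f ∈ idealG O g)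
    (d : ℕ) : coordMap O g d f = 0 := by
  revert d
  refine Submodule.span_induction ?_ ?_ ?_ ?_ hf
  · rintro _ ⟨σ, hσ, rfl⟩
    exact coordMap_g hO hg hcomm hσ
  · exact fun d => map_zero _
  · intro x y _ _ hx hy d
    rw [map_add, hx, hy, add_zero]
  · intro a x _ hx d
    exact coordMap_mul_eq_zero hcomm hx a d

lemma monomial_sub_ofCoords_coordMap_mem_idealG (hO : IsOrderIdeal O) (hg : IsPrebasis O g)
    (hcomm : MultMatricesCommute O g) {d : ℕ} {m : Term n} (hm : tdeg m = d) :
    monomial m 1 - ofCoords O d (coordMap O g d (monomial m 1)) ∈ idealG O g := by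
  induction d generalizing m with
  | zero =>
    obtain rfl := tdeg_eq_zero.mp hm
    rw [coordMap_monomial, one_smul, termCoords_of_mem hO hO.zero_mem hm, ofCoords_single,
      sub_self]
    exact zero_mem _
  | succ d ih =>
    obtain ⟨m', r, rfl⟩ := exists_eq_add_single_one (m := m) (by rintro rfl; simp [tdeg] at hm)
    have hm' : tdeg m' = d := by rw [tdeg_add_single_one] at hm; omega
    rw [← X_mul_monomial_eq, coordMap_X_mul hcomm]
    have h := Ideal.add_mem _ (Ideal.mul_mem_left _ (X r) (ih hm'))
      (X_mul_ofCoords_sub_mem_idealG hg r (coordMap O g d (monomial m' 1)))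
    convert h using 1
    ring

lemma sub_ofCoords_coordMap_mem_idealG (hO : IsOrderIdeal O) (hg : IsPrebasis O g)
    (hcomm : MultMatricesCommute O g) {d : ℕ} {f : MvPolynomial (Fin (n + 1)) K}
    (hf : f.IsHomogeneous d) : f - ofCoords O d (coordMap O g d f) ∈ idealG O g := by
  have hlin : ∀ p, p - ofCoords O d (coordMap O g d p) =
      ((LinearMap.id - (ofCoords O d).comp (coordMap O g d) :
        MvPolynomial (Fin (n + 1)) K →ₗ[K] MvPolynomial (Fin (n + 1)) K) p) := fun _ => rfl
  rw [hlin, f.as_sum, map_sum]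
  refine Ideal.sum_mem _ fun m hm => ?_
  have hmd : tdeg m = d := by
    rw [tdeg_eq_degree, Finsupp.degree_eq_weight_one]
    exact hf (mem_support_iff.mp hm)
  rw [← mul_one (coeff m f), ← smul_eq_mul, ← smul_monomial, map_smul, ← hlin]
  exact Submodule.smul_of_tower_mem _ _ (monomial_sub_ofCoords_coordMap_mem_idealG hO hg hcomm hmd)

end TermCoords

section Basis

variable {O : Set (Term n)} {g : Term n → MvPolynomial (Fin (n + 1)) K}

theorem degPart_sup_spanTerms_eq (hO : IsOrderIdeal O) (hg : IsPrebasis O g)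
    (hcomm : MultMatricesCommute O g) (d : ℕ) :
    degPart (idealG O g) d ⊔ spanTerms K (Od O d) = homogeneousSubmodule (Fin (n + 1)) K d := by
  refine le_antisymm (sup_le inf_le_right spanTerms_le_homogeneousSubmodule) fun f hf => ?_
  rw [← sub_add_cancel f (ofCoords O d (coordMap O g d f))]
  exact Submodule.add_mem_sup
    ⟨sub_ofCoords_coordMap_mem_idealG hO hg hcomm ((mem_homogeneousSubmodule _ _).mp hf),
      Submodule.sub_mem _ hf (ofCoords_mem_homogeneousSubmodule _)⟩
    (ofCoords_mem_spanTerms _)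

theorem disjoint_degPart_spanTerms (hO : IsOrderIdeal O) (hg : IsPrebasis O g)
    (hcomm : MultMatricesCommute O g) (d : ℕ) :
    Disjoint (degPart (idealG O g) d) (spanTerms K (Od O d)) := by
  refine Submodule.disjoint_def.mpr fun f hfI hfO => ?_
  obtain ⟨v, rfl⟩ := spanTerms_le_range_ofCoords hfO
  have hv : v = 0 :=
    (coordMap_ofCoords hO v).symm.trans (coordMap_eq_zero_of_mem_idealG hO hg hcomm hfI.1 d)
  rw [hv, map_zero]

theorem isBorderBasisOf_idealG (hO : IsOrderIdeal O) (hg : IsPrebasis O g)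
    (hcomm : MultMatricesCommute O g) : IsBorderBasisOf O g (idealG O g) :=
  ⟨hg, fun σ hσ => Ideal.subset_span ⟨σ, hσ, rfl⟩, fun d =>
    ⟨degPart_sup_spanTerms_eq hO hg hcomm d, disjoint_degPart_spanTerms hO hg hcomm d⟩⟩

end Basis

theorem char_by_matrices_general (O : Set (Term n)) (hO : IsOrderIdeal O)
    (g : Term n → MvPolynomial (Fin (n + 1)) K) (hg : IsPrebasis O g) :
    IsBorderBasisOf O g (idealG O g) ↔
      ∀ (d : ℕ) (r s : Fin (n + 1)),
        multMatrix O g r (d + 1) * multMatrix O g s d =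
          multMatrix O g s (d + 1) * multMatrix O g r d :=
  ⟨fun hb d r s => multMatrix_comm_of_disjoint hg (hb.2.2 (d + 2)).2 r s,
    isBorderBasisOf_idealG hO hg⟩

/-- **Characterization by formal multiplication matrices.** `G` is a homogeneous
`∂𝒪`-basis iff all the graded formal multiplication matrices commute:
`Χ_r^{(d+1)}Χ_s^{(d)} = Χ_s^{(d+1)}Χ_r^{(d)}` for every `d ≥ 0` and all `r, s`. -/
theorem char_by_matrices (O : Set (Term n)) (hO : IsOrderIdeal O) (hinf : O.Infinite)
    (g : Term n → MvPolynomial (Fin (n + 1)) K) (hg : IsPrebasis O g) :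
    IsBorderBasisOf O g (idealG O g) ↔
      ∀ (d : ℕ) (r s : Fin (n + 1)),
        multMatrix O g r (d + 1) * multMatrix O g s d =
          multMatrix O g s (d + 1) * multMatrix O g r d :=
  char_by_matrices_general O hO g hg

end Border
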